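/- arXiv:1410.0777 — 8 statements merged into one kernel-verified Lean document; each statement's English description precedes it below -/
import Mathlib

section
/- Let V and W be finite-dimensional complex vector spaces, let N ≥ 1, and let f_0, …, f_{N−1} : V → W be linear maps such that the map Φ : V → W ⊗_ℂ A_N, Φ(v) = Σ_{i=0}^{N−1} f_i(v) ⊗ t^i, is injective and its image is invariant under multiplication by t. Then there exists φ ∈ End(V) with φ^N = 0 such that f_i = f_{N−1} ∘ φ^{N−1−i} for all i = 0, …, N−1. -/
set_option synthInstance.maxHeartbeats 1000000
set_option maxHeartbeats 1000000

open Polynomial Finset TensorProduct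

/-- The truncated polynomial ring `A_N = ℂ[t]/(t^N)`. -/
abbrev AN (N : ℕ) : Type := Polynomial ℂ ⧸ Ideal.span {(X : Polynomial ℂ) ^ N}

/-- The class of `t` in `A_N`. -/
noncomputable def tbar (N : ℕ) : AN N := Ideal.Quotient.mk _ X

/-!
Φ is linear, so the invariance of its image lets multiplication by `t` be pulled back along the
injective Φ to an endomorphism φ of V with `Φ ∘ φ = (id ⊗ t) ∘ Φ`. Since the `t^i` (`i < N`) form a
basis of `A_N`, comparing coefficients of `t^(i+1)` gives `f (i+1) ∘ φ = f i`, which iterates to the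
formula for the `f i`; and `φ^N = 0` because `t^N = 0` and Φ is injective.
-/

theorem LinearMap.exists_comp_eq_of_injective {R U V M : Type*} [Semiring R]
    [AddCommMonoid U] [AddCommMonoid V] [AddCommMonoid M] [Module R U] [Module R V] [Module R M]
    {Φ : V →ₗ[R] M} (hΦ : Function.Injective Φ) (g : U →ₗ[R] M)
    (hg : ∀ u, ∃ v, g u = Φ v) : ∃ ψ : U →ₗ[R] V, Φ ∘ₗ ψ = g := by
  refine ⟨(LinearEquiv.ofInjective Φ hΦ).symm.toLinearMap ∘ₗ
    g.codRestrict (LinearMap.range Φ) fun u => (hg u).imp fun _ h => h.symm, ?_⟩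
  ext u
  simp only [LinearMap.comp_apply, LinearEquiv.coe_coe, LinearEquiv.ofInjective_symm_apply]
  rfl

theorem TensorProduct.sum_tmul_basis_right_injective' {R M N κ : Type*} [CommSemiring R]
    [AddCommMonoid M] [AddCommMonoid N] [Module R M] [Module R N] [Fintype κ]
    (𝒞 : Module.Basis κ R N) : Function.Injective fun m : κ → M => ∑ i, m i ⊗ₜ[R] 𝒞 i := by
  classical
  intro m m' h
  ext j
  simpa [map_sum, equivFinsuppOfBasisRight_apply_tmul_apply, Finsupp.single_apply] using
    congr(TensorProduct.equivFinsuppOfBasisRight (M := M) 𝒞 $h j)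

theorem tbar_pow_self (N : ℕ) : tbar N ^ N = 0 := by
  rw [tbar, ← map_pow, Ideal.Quotient.eq_zero_iff_mem]
  exact Ideal.subset_span rfl

noncomputable def powerBasisAN (N : ℕ) : PowerBasis ℂ (AN N) :=
  AdjoinRoot.powerBasis' (monic_X_pow N)

noncomputable def basisTbarPow (N : ℕ) : Module.Basis (Fin N) ℂ (AN N) :=
  (powerBasisAN N).basis.reindex (finCongr (natDegree_X_pow N))

theorem basisTbarPow_apply (N : ℕ) (i : Fin N) : basisTbarPow N i = tbar N ^ (i : ℕ) := by
  rw [basisTbarPow, Module.Basis.reindex_apply, PowerBasis.basis_eq_pow]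
  rfl

section truncSeries

variable (N : ℕ) {W : Type*} [AddCommGroup W] [Module ℂ W]

noncomputable def truncSeries : (ℕ → W) →ₗ[ℂ] W ⊗[ℂ] AN N :=
  ∑ i ∈ range N, (TensorProduct.mk ℂ W (AN N)).flip (tbar N ^ i) ∘ₗ LinearMap.proj i

variable {N}

theorem truncSeries_apply (w : ℕ → W) :
    truncSeries N w = ∑ i ∈ range N, w i ⊗ₜ[ℂ] (tbar N ^ i) := by
  simp [truncSeries]

theorem truncSeries_eq_truncSeries_iff {w w' : ℕ → W} :
    truncSeries N w = truncSeries N w' ↔ ∀ i < N, w i = w' i := by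
  refine ⟨fun h i hi => ?_, fun h => ?_⟩
  · have h' : ∑ j : Fin N, w j ⊗ₜ[ℂ] basisTbarPow N j =
        ∑ j : Fin N, w' j ⊗ₜ[ℂ] basisTbarPow N j := by
      simpa [truncSeries_apply, basisTbarPow_apply, Finset.sum_range] using h
    exact congr_fun (sum_tmul_basis_right_injective' (basisTbarPow N) h') ⟨i, hi⟩
  · simp only [truncSeries_apply]
    exact sum_congr rfl fun i hi => by rw [h i (mem_range.mp hi)]

theorem lTensor_mulLeft_tbar_truncSeries (w : ℕ → W) :
    (LinearMap.mulLeft ℂ (tbar N)).lTensor W (truncSeries N w) =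
      truncSeries N fun i => if i = 0 then 0 else w (i - 1) := by
  set s : ℕ → W := fun i => if i = 0 then 0 else w (i - 1)
  calc (LinearMap.mulLeft ℂ (tbar N)).lTensor W (truncSeries N w)
      = ∑ i ∈ range N, w i ⊗ₜ[ℂ] (tbar N ^ (i + 1)) := by
        simp [truncSeries_apply, map_sum, pow_succ']
    _ = ∑ i ∈ range (N + 1), s i ⊗ₜ[ℂ] (tbar N ^ i) := by
        simp [sum_range_succ', s]
    _ = truncSeries N s := by
        rw [sum_range_succ, tbar_pow_self, tmul_zero, add_zero, truncSeries_apply]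

end truncSeries

theorem lTensor_mulLeft_tbar_pow_self (N : ℕ) (W : Type*) [AddCommGroup W] [Module ℂ W] :
    (LinearMap.mulLeft ℂ (tbar N)).lTensor W ^ N = 0 := by
  rw [LinearMap.lTensor_pow, LinearMap.pow_mulLeft, tbar_pow_self, LinearMap.mulLeft_zero_eq_zero,
    LinearMap.lTensor_zero]

theorem LinearMap.comp_pow_eq_of_succ_comp_eq {R V W : Type*} [Semiring R] [AddCommMonoid V]
    [AddCommMonoid W] [Module R V] [Module R W] {N : ℕ} {g : ℕ → V →ₗ[R] W} {φ : V →ₗ[R] V}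
    (h : ∀ i, i + 1 < N → g (i + 1) ∘ₗ φ = g i) (k : ℕ) :
    ∀ i, i + k < N → g (i + k) ∘ₗ φ ^ k = g i := by
  induction k with
  | zero => intro i _; rfl
  | succ k ih =>
    intro i hi
    rw [pow_succ', Module.End.mul_eq_comp, ← LinearMap.comp_assoc, ← add_assoc,
      h (i + k) (by omega), ih i (by omega)]

theorem stmt4_general (N : ℕ) (V W : Type) [AddCommGroup V] [Module ℂ V]
    [AddCommGroup W] [Module ℂ W]
    (f : ℕ → (V →ₗ[ℂ] W))
    (Φ : V → W ⊗[ℂ] AN N)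
    (hΦ : ∀ v, Φ v = ∑ i ∈ Finset.range N, (f i v) ⊗ₜ[ℂ] (tbar N ^ i))
    (hinj : Function.Injective Φ)
    (hinv : ∀ v : V, ∃ v' : V,
      LinearMap.lTensor W (LinearMap.mulLeft ℂ (tbar N)) (Φ v) = Φ v') :
    ∃ φ : V →ₗ[ℂ] V, φ ^ N = 0 ∧
      ∀ i < N, f i = (f (N - 1)).comp (φ ^ (N - 1 - i)) := by
  set T := (LinearMap.mulLeft ℂ (tbar N)).lTensor W
  obtain rfl : Φ = truncSeries N ∘ₗ LinearMap.pi f :=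
    funext fun v => by simp [hΦ, truncSeries_apply]
  obtain ⟨φ, hφ⟩ := LinearMap.exists_comp_eq_of_injective hinj
    (T ∘ₗ truncSeries N ∘ₗ LinearMap.pi f) hinv
  have hsemiconj : Function.Semiconj (truncSeries N ∘ₗ LinearMap.pi f) φ T :=
    fun v => LinearMap.congr_fun hφ v
  have hsucc : ∀ i, i + 1 < N → f (i + 1) ∘ₗ φ = f i := by
    intro i hi
    ext v
    have hv := hsemiconj v
    simp only [LinearMap.comp_apply, LinearMap.pi_apply, T, lTensor_mulLeft_tbar_truncSeries,
      truncSeries_eq_truncSeries_iff] at hv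
    simpa using hv (i + 1) hi
  have hnil : φ ^ N = 0 := by
    ext v
    apply hinj
    rw [LinearMap.zero_apply, map_zero, Module.End.coe_pow, hsemiconj.iterate_right,
      ← Module.End.coe_pow, lTensor_mulLeft_tbar_pow_self, LinearMap.zero_apply]
  refine ⟨φ, hnil, fun i hi => ?_⟩
  have h := LinearMap.comp_pow_eq_of_succ_comp_eq hsucc (N - 1 - i) i (by omega)
  rwa [show i + (N - 1 - i) = N - 1 by omega, eq_comm] at h

theorem stmt4 (N : ℕ) (hN : 1 ≤ N) (V W : Type) [AddCommGroup V] [Module ℂ V]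
    [FiniteDimensional ℂ V] [AddCommGroup W] [Module ℂ W] [FiniteDimensional ℂ W]
    (f : ℕ → (V →ₗ[ℂ] W))
    (Φ : V → W ⊗[ℂ] AN N)
    (hΦ : ∀ v, Φ v = ∑ i ∈ Finset.range N, (f i v) ⊗ₜ[ℂ] (tbar N ^ i))
    (hinj : Function.Injective Φ)
    (hinv : ∀ v : V, ∃ v' : V,
      LinearMap.lTensor W (LinearMap.mulLeft ℂ (tbar N)) (Φ v) = Φ v') :
    ∃ φ : V →ₗ[ℂ] V, φ ^ N = 0 ∧
      ∀ i < N, f i = (f (N - 1)).comp (φ ^ (N - 1 - i)) :=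
  stmt4_general N V W f Φ hΦ hinj hinv
end

section
/- Let W be a finite-dimensional complex vector space, ħ ∈ ℂ, and let (A_{k,i})_{k ≥ 1, i ≥ 0} be a family of endomorphisms of W with A_{k,i} = 0 for all but finitely many pairs (k, i). Let U ⊆ W ⊗_ℂ ℂ[t, t^{−1}] be the ℂ-linear span of the vectors w ⊗ t^i + Σ_{k ≥ 1} A_{k,i}(w) ⊗ t^{−k} for all w ∈ W and i ≥ 0. Let α_ħ : W ⊗ ℂ[t, t^{−1}] → W ⊗ ℂ[t, t^{−1}] be the linear map with α_ħ(w ⊗ t^j) = w ⊗ t^j for j ≠ 0 and α_ħ(w ⊗ t^0) = ħ w ⊗ t^0. Then α_ħ((id_W ⊗ t)(U)) ⊆ U if and only if A_{k+1,i} = A_{k,i+1} + ħ A_{k,0} A_{1,i} for all k ≥ 1 and i ≥ 0. -/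
/-!
Every element `x` of `U` is determined by its coefficients in nonnegative degrees: the
coefficient of `t^{-k}` is `∑ᵢ A_{k,i} (x_i)`, because this linear relation holds for the
generators. The image under `α_ħ ∘ t` of the generator indexed by `(i, w)` has nonnegative part
`w ⊗ t^{i+1} + ħ A_{1,i} w ⊗ t⁰` and coefficient `A_{k+1,i} w` at `t^{-k}`; hence it lies in `U`
exactly when `A_{k+1,i} w = A_{k,i+1} w + ħ A_{k,0} A_{1,i} w` for all `k ≥ 1`, and then it is the
sum of the generators indexed by `(i + 1, w)` and `(0, ħ A_{1,i} w)`.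
-/

open Finsupp

theorem Finsupp.finsum_single_apply {ι α M : Type*} [AddCommMonoid M] {c : ι → α} {f : ι → M}
    (hf : f.HasFiniteSupport) (a : α) :
    (∑ᶠ k, single (c k) (f k)) a = ∑ᶠ k, single (c k) (f k) a := by
  have hsupp : (fun k => single (c k) (f k)).HasFiniteSupport :=
    hf.subset fun k hk hfk => hk (by simp [hfk])
  exact (applyAddHom a).map_finsum hsupp

theorem Finsupp.mapDomain_add_right_apply {G M : Type*} [AddGroup G] [AddCommMonoid M]
    (a : G) (g : G →₀ M) (j : G) : mapDomain (· + a) g j = g (j - a) := by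
  simpa using mapDomain_apply (add_left_injective a) g (j - a)

/- `W ⊗ ℂ[t,t⁻¹]` is modelled as `ℤ →₀ W` (the value at `j` being the coefficient of `t^j`),
so `w ⊗ t^j` is `single j w`, multiplication by `t` is `mapDomain (· + 1)`, and `α_ħ` is
`rescaleZero ħ`. -/

namespace SatoBigCell

variable {R W : Type*} [CommRing R] [AddCommGroup W] [Module R W]

noncomputable def gen (A : ℕ → ℕ → W →ₗ[R] W) (i : ℕ) (w : W) : ℤ →₀ W :=
  single (i : ℤ) w + ∑ᶠ k : ℕ, single (-(k : ℤ) - 1) (A (k + 1) i w)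

noncomputable def point (A : ℕ → ℕ → W →ₗ[R] W) : Submodule R (ℤ →₀ W) :=
  Submodule.span R {v | ∃ i w, v = gen A i w}

variable (R) in
noncomputable def nonnegPart : (ℤ →₀ W) →ₗ[R] (ℕ →₀ W) :=
  lcomapDomain ((↑) : ℕ → ℤ) Nat.cast_injective

noncomputable def rescaleZero (ħ : R) : (ℤ →₀ W) →ₗ[R] (ℤ →₀ W) :=
  LinearMap.id + lsingle 0 ∘ₗ ((ħ - 1) • lapply 0)

noncomputable def alphaShift (ħ : R) : (ℤ →₀ W) →ₗ[R] (ℤ →₀ W) :=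
  rescaleZero ħ ∘ₗ lmapDomain W R (· + 1)

theorem rescaleZero_apply_zero (ħ : R) (g : ℤ →₀ W) : rescaleZero ħ g 0 = ħ • g 0 := by
  simp [rescaleZero, sub_smul]

theorem rescaleZero_apply_of_ne (ħ : R) (g : ℤ →₀ W) {j : ℤ} (hj : j ≠ 0) :
    rescaleZero ħ g j = g j := by
  simp [rescaleZero, single_eq_of_ne hj]

variable {A : ℕ → ℕ → W →ₗ[R] W} (hfin : {p : ℕ × ℕ | A p.1 p.2 ≠ 0}.Finite)
include hfin

theorem hasFiniteSupport_apply (i : ℕ) (w : W) :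
    (fun k => A (k + 1) i w).HasFiniteSupport := by
  have hfin' : {k | A (k + 1) i ≠ 0}.Finite :=
    hfin.preimage (f := fun k => (k + 1, i)) fun a _ b _ h => by simpa using h
  exact hfin'.subset fun k hk hA => hk (by simp [hA])

theorem gen_apply_natCast (i n : ℕ) (w : W) : gen A i w n = single i w n := by
  rw [gen, Finsupp.add_apply, single_apply_left Nat.cast_injective,
    finsum_single_apply (hasFiniteSupport_apply hfin i w),
    finsum_eq_zero_of_forall_eq_zero fun k => single_eq_of_ne (by omega), add_zero]

theorem gen_apply_negSucc (i m : ℕ) (w : W) : gen A i w (Int.negSucc m) = A (m + 1) i w := by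
  rw [gen, Finsupp.add_apply, single_eq_of_ne (by omega), zero_add,
    finsum_single_apply (hasFiniteSupport_apply hfin i w),
    finsum_eq_single _ m fun k hk => single_eq_of_ne (by omega),
    show -(m : ℤ) - 1 = Int.negSucc m by omega, single_eq_same]

theorem nonnegPart_gen (i : ℕ) (w : W) : nonnegPart R (gen A i w) = single i w := by
  ext n
  simp [nonnegPart, gen_apply_natCast hfin]

theorem apply_negSucc_eq_of_mem_point {x : ℤ →₀ W} (hx : x ∈ point A) (m : ℕ) :
    x (Int.negSucc m) = lsum R (A (m + 1)) (nonnegPart R x) := by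
  let φ : (ℤ →₀ W) →ₗ[R] W := lapply (Int.negSucc m) - lsum R (A (m + 1)) ∘ₗ nonnegPart R
  have hle : point A ≤ LinearMap.ker φ := Submodule.span_le.2 <| by
    rintro _ ⟨i, w, rfl⟩
    simp [φ, gen_apply_negSucc hfin, nonnegPart_gen hfin]
  exact sub_eq_zero.1 (hle hx)

theorem alphaShift_gen_apply_natCast (ħ : R) (i n : ℕ) (w : W) :
    alphaShift ħ (gen A i w) n = (single (i + 1) w + single 0 (ħ • A 1 i w) : ℕ →₀ W) n := by
  cases n with
  | zero =>
    rw [Nat.cast_zero, alphaShift, LinearMap.comp_apply, rescaleZero_apply_zero, lmapDomain_apply,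
      mapDomain_add_right_apply, zero_sub, show (-1 : ℤ) = Int.negSucc 0 from rfl,
      gen_apply_negSucc hfin]
    simp
  | succ n =>
    rw [alphaShift, LinearMap.comp_apply, rescaleZero_apply_of_ne _ _ (by omega), lmapDomain_apply,
      mapDomain_add_right_apply, Nat.cast_succ, add_sub_cancel_right, gen_apply_natCast hfin]
    simp [single_apply]

theorem alphaShift_gen_apply_negSucc (ħ : R) (i m : ℕ) (w : W) :
    alphaShift ħ (gen A i w) (Int.negSucc m) = A (m + 2) i w := by
  rw [alphaShift, LinearMap.comp_apply, rescaleZero_apply_of_ne _ _ (Int.negSucc_ne_zero m),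
    lmapDomain_apply, mapDomain_add_right_apply, Int.negSucc_sub_one, gen_apply_negSucc hfin]

theorem alphaShift_gen_mem_point_iff (ħ : R) (i : ℕ) (w : W) :
    alphaShift ħ (gen A i w) ∈ point A ↔
      ∀ m, A (m + 2) i w = A (m + 1) (i + 1) w + A (m + 1) 0 (ħ • A 1 i w) := by
  constructor
  · intro hx m
    have hnonneg : nonnegPart R (alphaShift ħ (gen A i w)) =
        single (i + 1) w + single 0 (ħ • A 1 i w) := by
      ext n
      simp [nonnegPart, alphaShift_gen_apply_natCast hfin]
    have h := apply_negSucc_eq_of_mem_point hfin hx m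
    rwa [alphaShift_gen_apply_negSucc hfin, hnonneg, map_add, lsum_single, lsum_single] at h
  · intro hrel
    have heq : alphaShift ħ (gen A i w) = gen A (i + 1) w + gen A 0 (ħ • A 1 i w) := by
      ext (n | m)
      · simp [Int.ofNat_eq_natCast, alphaShift_gen_apply_natCast hfin, gen_apply_natCast hfin]
      · rw [alphaShift_gen_apply_negSucc hfin, Finsupp.add_apply, gen_apply_negSucc hfin,
          gen_apply_negSucc hfin, hrel]
    rw [heq]
    exact add_mem (Submodule.subset_span ⟨_, _, rfl⟩) (Submodule.subset_span ⟨_, _, rfl⟩)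

theorem alphaShift_mapsTo_point_iff (ħ : R) :
    (∀ u ∈ point A, alphaShift ħ u ∈ point A) ↔
      ∀ i m, A (m + 2) i = A (m + 1) (i + 1) + ħ • (A (m + 1) 0 ∘ₗ A 1 i) := by
  calc (∀ u ∈ point A, alphaShift ħ u ∈ point A)
      ↔ ∀ i w, alphaShift ħ (gen A i w) ∈ point A := by
        refine ⟨fun h i w => h _ (Submodule.subset_span ⟨i, w, rfl⟩), fun h u hu => ?_⟩
        refine (Submodule.span_le (p := (point A).comap (alphaShift ħ))).2 ?_ hu
        rintro _ ⟨i, w, rfl⟩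
        exact h i w
    _ ↔ ∀ i m, A (m + 2) i = A (m + 1) (i + 1) + ħ • (A (m + 1) 0 ∘ₗ A 1 i) := by
        simp only [alphaShift_gen_mem_point_iff hfin, LinearMap.ext_iff, LinearMap.add_apply,
          LinearMap.smul_apply, LinearMap.comp_apply, map_smul]
        exact forall_congr' fun i => forall_comm

end SatoBigCell

theorem stmt9_general (W : Type) [AddCommGroup W] [Module ℂ W]
    (hbar : ℂ) (A : ℕ → ℕ → (W →ₗ[ℂ] W))
    (hfin : {p : ℕ × ℕ | A p.1 p.2 ≠ 0}.Finite)
    (αₕ : (ℤ →₀ W) → (ℤ →₀ W))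
    (hα : ∀ g : ℤ →₀ W, αₕ g = g + Finsupp.single 0 ((hbar - 1) • g 0))
    (U : Submodule ℂ (ℤ →₀ W))
    (hU : U = Submodule.span ℂ {v : ℤ →₀ W | ∃ (i : ℕ) (w : W),
      v = Finsupp.single (i : ℤ) w +
        ∑ᶠ k : ℕ, Finsupp.single (-(k : ℤ) - 1) (A (k + 1) i w)}) :
    (∀ u ∈ U, αₕ (Finsupp.mapDomain (· + 1) u) ∈ U) ↔
    (∀ k i : ℕ, 1 ≤ k → A (k + 1) i = A k (i + 1) + hbar • ((A k 0) ∘ₗ (A 1 i))) := by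
  obtain rfl : αₕ = SatoBigCell.rescaleZero hbar := funext hα
  subst hU
  refine (SatoBigCell.alphaShift_mapsTo_point_iff hfin hbar).trans
    ⟨fun h k i hk => ?_, fun h i m => h (m + 1) i m.succ_pos⟩
  obtain ⟨m, rfl⟩ := Nat.exists_eq_add_of_le' hk
  exact h i m

theorem stmt9 (W : Type) [AddCommGroup W] [Module ℂ W] [FiniteDimensional ℂ W]
    (hbar : ℂ) (A : ℕ → ℕ → (W →ₗ[ℂ] W))
    (hfin : {p : ℕ × ℕ | A p.1 p.2 ≠ 0}.Finite)
    (αₕ : (ℤ →₀ W) → (ℤ →₀ W))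
    (hα : ∀ g : ℤ →₀ W, αₕ g = g + Finsupp.single 0 ((hbar - 1) • g 0))
    (U : Submodule ℂ (ℤ →₀ W))
    (hU : U = Submodule.span ℂ {v : ℤ →₀ W | ∃ (i : ℕ) (w : W),
      v = Finsupp.single (i : ℤ) w +
        ∑ᶠ k : ℕ, Finsupp.single (-(k : ℤ) - 1) (A (k + 1) i w)}) :
    (∀ u ∈ U, αₕ (Finsupp.mapDomain (· + 1) u) ∈ U) ↔
    (∀ k i : ℕ, 1 ≤ k → A (k + 1) i = A k (i + 1) + hbar • ((A k 0) ∘ₗ (A 1 i))) :=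
  stmt9_general W hbar A hfin αₕ hα U hU
end

section
/- Let W be an n-dimensional complex vector space, N ≥ 1, and x_1, …, x_N ∈ End(W). Let pr : W ⊗ ℂ[t, t^{−1}] → W ⊗ ℂ[t, t^{−1}] be the projection which annihilates the component W ⊗ t^0 and is the identity on W ⊗ t^j for j ≠ 0. Let U ⊆ W ⊗ ℂ[t, t^{−1}] be the ℂ-span of W ⊗ t^N ℂ[t] together with the vectors w ⊗ t^k + Σ_{i=k+1}^{N} x_i(w) ⊗ t^{k−i} for all w ∈ W and k = 0, …, N−1. Then W ⊗ t^N ℂ[t] ⊆ U ⊆ W ⊗ t^{−N} ℂ[t] and pr((id_W ⊗ t)(U)) ⊆ U. -/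
open Finsupp

/- Both inclusions are read off the generators: a twisted vector
`w ⊗ t^k + Σ_{i=k+1}^N x_i(w) ⊗ t^{k-i}` has degrees in `[k - N, k] ⊆ [-N, N]`.
For stability, `pr ∘ t` sends the twisted vector of index `k` to the one of index `k + 1`:
the only term landing in degree `0` is `x_{k+1}(w) ⊗ t^0`, which `pr` removes, and for
`k + 1 = N` what is left is `w ⊗ t^N`, already in `W ⊗ t^N ℂ[t]`. -/

theorem Finsupp.supported_le_of_single_mem {R M α : Type*} [Semiring R] [AddCommMonoid M]
    [Module R M] {s : Set α} {S : Submodule R (α →₀ M)}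
    (h : ∀ a ∈ s, ∀ m : M, single a m ∈ S) : supported M R s ≤ S := by
  intro f hf
  rw [← f.sum_single]
  exact Submodule.finsuppSum_mem _ _ _ _ fun a ha => h a (hf (mem_support_iff.2 ha)) _

section Laurent

variable (R : Type*) {M : Type*} [Ring R] [AddCommGroup M] [Module R M]

noncomputable def prShift : (ℤ →₀ M) →ₗ[R] (ℤ →₀ M) :=
  lmapDomain M R (· + 1) - lsingle 0 ∘ₗ lapply 0 ∘ₗ lmapDomain M R (· + 1)

variable {R}

theorem prShift_apply (f : ℤ →₀ M) :
    prShift R f = mapDomain (· + 1) f - single 0 (mapDomain (· + 1) f 0) :=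
  rfl

theorem prShift_single_of_ne {j : ℤ} (hj : j ≠ -1) (w : M) :
    prShift R (single j w) = single (j + 1) w := by
  rw [prShift_apply, mapDomain_single, single_eq_of_ne (by omega), single_zero, sub_zero]

theorem prShift_single_neg_one (w : M) : prShift R (single (-1 : ℤ) w) = 0 := by
  rw [prShift_apply, mapDomain_single, neg_add_cancel, single_eq_same, sub_self]

noncomputable def twistedSingle (N : ℕ) (x : ℕ → M →ₗ[R] M) (k : ℕ) (w : M) : ℤ →₀ M :=
  single (k : ℤ) w + ∑ i ∈ Finset.Icc (k + 1) N, single ((k : ℤ) - i) (x i w)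

theorem twistedSingle_self (N : ℕ) (x : ℕ → M →ₗ[R] M) (w : M) :
    twistedSingle N x N w = single (N : ℤ) w := by
  simp [twistedSingle]

theorem twistedSingle_mem_supported (N : ℕ) (x : ℕ → M →ₗ[R] M) (k : ℕ) (w : M) :
    twistedSingle N x k w ∈ supported M R (Set.Ici (-(N : ℤ))) := by
  refine add_mem (single_mem_supported R _ (by simp only [Set.mem_Ici]; omega))
    (sum_mem fun i hi => ?_)
  rw [Finset.mem_Icc] at hi
  exact single_mem_supported R _ (by simp only [Set.mem_Ici]; omega)

theorem prShift_twistedSingle {N : ℕ} (x : ℕ → M →ₗ[R] M) {k : ℕ} (hk : k < N) (w : M) :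
    prShift R (twistedSingle N x k w) = twistedSingle N x (k + 1) w := by
  have hIcc : Finset.Icc (k + 1) N = insert (k + 1) (Finset.Icc (k + 1 + 1) N) :=
    (Finset.insert_Icc_add_one_left_eq_Icc hk).symm
  have hlow : ((k : ℤ) - (k + 1 : ℕ)) = -1 := by push_cast; ring
  rw [twistedSingle, twistedSingle, hIcc, Finset.sum_insert (by simp), hlow, map_add, map_add,
    prShift_single_neg_one, zero_add, map_sum, prShift_single_of_ne (by omega)]
  push_cast
  refine congrArg _ (Finset.sum_congr rfl fun i hi => ?_)
  rw [Finset.mem_Icc] at hi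
  rw [prShift_single_of_ne (by omega)]
  congr 1
  ring

end Laurent

theorem stmt10_general (N : ℕ) (W : Type) [AddCommGroup W] [Module ℂ W]
    (x : ℕ → (W →ₗ[ℂ] W))
    (U : Submodule ℂ (ℤ →₀ W))
    (hU : U = Submodule.span ℂ
      ({v : ℤ →₀ W | ∃ (j : ℤ) (w : W), (N : ℤ) ≤ j ∧ v = Finsupp.single j w} ∪
       {v : ℤ →₀ W | ∃ (k : ℕ) (w : W), k < N ∧
         v = Finsupp.single (k : ℤ) w +
           ∑ i ∈ Finset.Icc (k + 1) N, Finsupp.single ((k : ℤ) - (i : ℤ)) (x i w)})) :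
    (∀ f : ℤ →₀ W, (∀ j : ℤ, j < (N : ℤ) → f j = 0) → f ∈ U) ∧
    (∀ f ∈ U, ∀ j : ℤ, j < -(N : ℤ) → f j = 0) ∧
    (∀ u ∈ U, Finsupp.mapDomain (· + 1) u -
        Finsupp.single 0 ((Finsupp.mapDomain (· + 1) u) 0) ∈ U) := by
  have single_mem : ∀ j : ℤ, (N : ℤ) ≤ j → ∀ w, single j w ∈ U := fun j hj w => by
    rw [hU]; exact Submodule.subset_span (Or.inl ⟨j, w, hj, rfl⟩)
  have twisted_mem : ∀ k < N, ∀ w, twistedSingle N x k w ∈ U := fun k hk w => by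
    rw [hU]; exact Submodule.subset_span (Or.inr ⟨k, w, hk, rfl⟩)
  have hsupp : supported W ℂ (Set.Ici (N : ℤ)) ≤ U :=
    supported_le_of_single_mem single_mem
  have hbound : U ≤ supported W ℂ (Set.Ici (-(N : ℤ))) := by
    rw [hU, Submodule.span_le]
    rintro _ (⟨j, w, hj, rfl⟩ | ⟨k, w, -, rfl⟩)
    · exact single_mem_supported ℂ w (by simp only [Set.mem_Ici]; omega)
    · exact twistedSingle_mem_supported N x k w
  have hstable : U ≤ U.comap (prShift ℂ) := by
    conv_lhs => rw [hU]
    rw [Submodule.span_le]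
    rintro _ (⟨j, w, hj, rfl⟩ | ⟨k, w, hk, rfl⟩)
    · rw [SetLike.mem_coe, Submodule.mem_comap, prShift_single_of_ne (by omega)]
      exact single_mem _ (by omega) w
    · change prShift ℂ (twistedSingle N x k w) ∈ U
      rw [prShift_twistedSingle x hk w]
      rcases (show k + 1 < N ∨ k + 1 = N by omega) with hk' | hk'
      · exact twisted_mem _ hk' w
      · rw [hk', twistedSingle_self]; exact single_mem _ le_rfl w
  refine ⟨fun f hf => hsupp ((mem_supported' ℂ f).2 fun j hj => hf j (by simpa using hj)),
    fun f hf j hj => (mem_supported' ℂ f).1 (hbound hf) j (by simpa using hj),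
    fun u hu => hstable hu⟩

theorem stmt10 (n N : ℕ) (hN : 1 ≤ N) (W : Type) [AddCommGroup W] [Module ℂ W]
    [FiniteDimensional ℂ W] (hW : Module.finrank ℂ W = n)
    (x : ℕ → (W →ₗ[ℂ] W))
    (U : Submodule ℂ (ℤ →₀ W))
    (hU : U = Submodule.span ℂ
      ({v : ℤ →₀ W | ∃ (j : ℤ) (w : W), (N : ℤ) ≤ j ∧ v = Finsupp.single j w} ∪
       {v : ℤ →₀ W | ∃ (k : ℕ) (w : W), k < N ∧
         v = Finsupp.single (k : ℤ) w +
           ∑ i ∈ Finset.Icc (k + 1) N, Finsupp.single ((k : ℤ) - (i : ℤ)) (x i w)})) :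
    (∀ f : ℤ →₀ W, (∀ j : ℤ, j < (N : ℤ) → f j = 0) → f ∈ U) ∧
    (∀ f ∈ U, ∀ j : ℤ, j < -(N : ℤ) → f j = 0) ∧
    (∀ u ∈ U, Finsupp.mapDomain (· + 1) u -
        Finsupp.single 0 ((Finsupp.mapDomain (· + 1) u) 0) ∈ U) :=
  stmt10_general N W x U hU
end

section
/- Let m ≥ 1, let A be a complex m×2 matrix with rows a_1, …, a_m, and let B be a nilpotent complex 2×2 matrix. Form the 2m×2 matrix M whose i-th row is a_i B for 1 ≤ i ≤ m and whose (m+i)-th row is a_i for 1 ≤ i ≤ m, and for 1 ≤ i < j ≤ 2m let T_{i,j} denote the 2×2 minor of M on rows i and j. Then T_{i,j} = 0 for all 1 ≤ i < j ≤ m, and T_{i,m+j} = T_{j,m+i} for all 1 ≤ i, j ≤ m. -/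
open Matrix

/- The 2m×2 matrix `M` has rows indexed by `Fin m ⊕ Fin m`: row `Sum.inl i`
(row `i`, `1 ≤ i ≤ m`) is `a_i B = (A * B) i`, and row `Sum.inr i` (row `m + i`)
is `a_i = A i`. The 2×2 minor `T` on two rows `r, s` is the determinant of the
2×2 matrix with rows `M r` and `M s`. -/

theorem stmt12 (m : ℕ) (hm : 1 ≤ m) (A : Matrix (Fin m) (Fin 2) ℂ)
    (B : Matrix (Fin 2) (Fin 2) ℂ) (hB : IsNilpotent B)
    (M : Matrix (Fin m ⊕ Fin m) (Fin 2) ℂ)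
    (hM : ∀ i : Fin m, M (Sum.inl i) = (A * B) i ∧ M (Sum.inr i) = A i)
    (T : (Fin m ⊕ Fin m) → (Fin m ⊕ Fin m) → ℂ)
    (hT : ∀ r s, T r s = Matrix.det (Matrix.of ![M r, M s])) :
    (∀ i j : Fin m, i < j → T (Sum.inl i) (Sum.inl j) = 0) ∧
    (∀ i j : Fin m, T (Sum.inl i) (Sum.inr j) = T (Sum.inl j) (Sum.inr i)) := by
  have htr : B 0 0 + B 1 1 = 0 := by
    have := (Matrix.isNilpotent_trace_of_isNilpotent hB).eq_zero
    simpa [Matrix.trace_fin_two] using this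
  have hdet : B 0 0 * B 1 1 - B 0 1 * B 1 0 = 0 := by
    obtain ⟨n, hn⟩ := hB
    have hnil : IsNilpotent B.det := ⟨n, by rw [← Matrix.det_pow, hn]; simp⟩
    have := hnil.eq_zero
    rw [Matrix.det_fin_two] at this
    linear_combination this
  have hAB : ∀ (i : Fin m) (k : Fin 2),
      (A * B) i k = A i 0 * B 0 k + A i 1 * B 1 k := by
    intro i k
    rw [Matrix.mul_apply, Fin.sum_univ_two]
  constructor
  · intro i j _
    rw [hT, Matrix.det_fin_two]
    simp only [Matrix.cons_val', Matrix.cons_val_zero, Matrix.cons_val_one,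
      Matrix.head_cons, Matrix.of_apply, Matrix.empty_val', Matrix.cons_val_fin_one,
      Matrix.head_fin_const]
    rw [(hM i).1, (hM j).1, hAB, hAB, hAB, hAB]
    linear_combination (A i 0 * A j 1 - A i 1 * A j 0) * hdet
  · intro i j
    rw [hT, hT, Matrix.det_fin_two, Matrix.det_fin_two]
    simp only [Matrix.cons_val', Matrix.cons_val_zero, Matrix.cons_val_one,
      Matrix.head_cons, Matrix.of_apply, Matrix.empty_val', Matrix.cons_val_fin_one,
      Matrix.head_fin_const]
    rw [(hM i).1, (hM j).1, (hM i).2, (hM j).2, hAB, hAB, hAB, hAB]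
    linear_combination (A i 0 * A j 1 - A i 1 * A j 0) * htr
end

section
/- Let A be a complex 2×2 matrix with rows a_1, a_2, and let B be a nilpotent complex 2×2 matrix. Form the 4×2 matrix M with rows a_1 B, a_2 B, a_1, a_2, and let T_{i,j} denote the 2×2 minor of M on rows i and j. Then T_{1,3} T_{2,4} = T_{1,4}². -/
open Matrix

theorem stmt13 (A B : Matrix (Fin 2) (Fin 2) ℂ) (hB : IsNilpotent B)
    (M : Matrix (Fin 4) (Fin 2) ℂ)
    (hM : M 0 = (A * B) 0 ∧ M 1 = (A * B) 1 ∧ M 2 = A 0 ∧ M 3 = A 1)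
    (T : Fin 4 → Fin 4 → ℂ)
    (hT : ∀ i j, T i j = Matrix.det (Matrix.of ![M i, M j])) :
    T 0 2 * T 1 3 = (T 0 3) ^ 2 := by
  have htr : Matrix.trace B = 0 := by
    simpa using (Matrix.isNilpotent_trace_of_isNilpotent hB).eq_zero
  have hdet : B.det = 0 := by
    obtain ⟨n, hn⟩ := hB
    have : B.det ^ n = 0 := by rw [← Matrix.det_pow, hn]; simp [Matrix.det_fin_two]
    exact (pow_eq_zero_iff'.mp this).1
  obtain ⟨h0, h1, h2, h3⟩ := hM
  rw [Matrix.trace_fin_two] at htr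
  rw [Matrix.det_fin_two] at hdet
  simp only [hT, h0, h1, h2, h3, Matrix.det_fin_two, Matrix.mul_apply,
    Fin.sum_univ_two, Matrix.of_apply, Matrix.cons_val_zero, Matrix.cons_val_one,
    Matrix.head_cons]
  have hb : B 1 1 = - B 0 0 := by linear_combination htr
  rw [hb] at hdet ⊢
  ring_nf
  linear_combination (A 0 0 * A 1 1 - A 0 1 * A 1 0)^2 * hdet
end

section
/- Let W = ℂ² with basis w_1, w_2, and define an antisymmetric bilinear form ⟨·,·⟩ on W ⊗ ℂ[t, t^{−1}] by ⟨w_1 ⊗ t^i, w_2 ⊗ t^j⟩ = δ_{i+j,−1}, ⟨w_2 ⊗ t^j, w_1 ⊗ t^i⟩ = −δ_{i+j,−1}, and ⟨w_1 ⊗ t^i, w_1 ⊗ t^j⟩ = ⟨w_2 ⊗ t^i, w_2 ⊗ t^j⟩ = 0. Let (x_i)_{i≥1}, (y_i)_{i≥1}, (z_i)_{i≥1} be complex numbers, all but finitely many equal to zero, and let U be the ℂ-span of the vectors u_k = w_1 ⊗ t^k + Σ_{i≥1} (y_{i+k} w_1 + z_{i+k} w_2) ⊗ t^{−i} and u'_k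 = w_2 ⊗ t^k + Σ_{i≥1} (x_{i+k} w_1 − y_{i+k} w_2) ⊗ t^{−i} over all k ≥ 0. Then U is isotropic with respect to ⟨·,·⟩, and pr((id_W ⊗ t)(U)) ⊆ U, where pr is the projection annihilating the component W ⊗ t^0 and fixing W ⊗ t^j for j ≠ 0. -/
/-! The form is antisymmetric and `W ⊗ t⁻¹ℂ[t⁻¹]` is isotropic, so the pairing of two generators
`w ⊗ t^k + a` and `w' ⊗ t^l + b` reduces to the cross terms `⟨w ⊗ t^k, b⟩ - ⟨w' ⊗ t^l, a⟩`, each a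
single coefficient of index `k + l + 1`; the shape of `u_k`, `u'_k` makes them cancel. Isotropy
passes from the generators to their span by bilinearity. For the second claim, `pr ∘ t` sends
`u_k ↦ u_{k+1}` and `u'_k ↦ u'_{k+1}`: `t` moves the `t⁻¹`-coefficient to `t⁰`, where `pr`
kills it. -/

open Finsupp

namespace Finsupp

variable {ι α M : Type*} [AddCommMonoid M] {f : ι → α} {g : ι → M}

theorem finsum_single_apply_s14 (hg : (Function.support g).Finite) (a : α) :
    (∑ᶠ i, single (f i) (g i)) a = ∑ᶠ i, single (f i) (g i) a :=
  (applyAddHom (M := M) a).map_finsum (hg.subset fun i hi => by simpa using hi)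

theorem finsum_single_apply_self (hf : f.Injective) (hg : (Function.support g).Finite) (i : ι) :
    (∑ᶠ j, single (f j) (g j)) (f i) = g i := by
  rw [finsum_single_apply_s14 hg, finsum_eq_single _ i fun j hj => single_eq_of_ne (hf.ne hj).symm,
    single_eq_same]

theorem finsum_single_apply_of_notMem_range (hg : (Function.support g).Finite) {a : α}
    (ha : a ∉ Set.range f) : (∑ᶠ j, single (f j) (g j)) a = 0 := by
  rw [finsum_single_apply_s14 hg]
  exact finsum_eq_zero_of_forall_eq_zero fun j => single_eq_of_ne fun h => ha ⟨j, h.symm⟩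

theorem mapDomain_add_one_apply (u : ℤ →₀ M) (j : ℤ) : mapDomain (· + 1) u j = u (j - 1) := by
  simpa using mapDomain_apply (add_left_injective (1 : ℤ)) u (j - 1)

end Finsupp

noncomputable section

namespace DegenerateSl2

variable (R : Type*) [CommRing R]

def coord (j : ℤ) (c : Fin 2) : (ℤ →₀ (Fin 2 → R)) →ₗ[R] R :=
  LinearMap.proj c ∘ₗ lapply j

def pairing : (ℤ →₀ (Fin 2 → R)) →ₗ[R] (ℤ →₀ (Fin 2 → R)) →ₗ[R] R :=
  lsum R fun i => (LinearMap.proj 0).smulRight (coord R (-1 - i) 1)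
    - (LinearMap.proj 1).smulRight (coord R (-1 - i) 0)

variable {R}

theorem pairing_single_left (i : ℤ) (v : Fin 2 → R) (b : ℤ →₀ (Fin 2 → R)) :
    pairing R (single i v) b = v 0 * b (-1 - i) 1 - v 1 * b (-1 - i) 0 := by
  simp [pairing, coord]

theorem pairing_apply (a b : ℤ →₀ (Fin 2 → R)) :
    pairing R a b = ∑ᶠ i, (a i 0 * b (-1 - i) 1 - a i 1 * b (-1 - i) 0) := by
  rw [finsum_eq_sum_of_support_subset _ (s := a.support) fun i hi => by
    by_contra h; simp_all]
  conv_lhs => rw [← a.sum_single]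
  simp [Finsupp.sum, pairing_single_left]

theorem pairing_swap (a b : ℤ →₀ (Fin 2 → R)) : pairing R b a = -pairing R a b := by
  rw [pairing_apply, pairing_apply, ← finsum_comp_equiv (Equiv.subLeft (-1)),
    ← finsum_neg_distrib]
  refine finsum_congr fun i => ?_
  simp only [Equiv.subLeft_apply, sub_sub_cancel]
  ring

theorem pairing_eq_zero_of_nonneg_eq_zero {a b : ℤ →₀ (Fin 2 → R)}
    (ha : ∀ j, 0 ≤ j → a j = 0) (hb : ∀ j, 0 ≤ j → b j = 0) : pairing R a b = 0 := by
  rw [pairing_apply]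
  refine finsum_eq_zero_of_forall_eq_zero fun i => ?_
  rcases le_or_gt 0 i with hi | hi
  · simp [ha i hi]
  · simp [hb (-1 - i) (by omega)]

theorem pairing_single_add_single_add (k l : ℕ) (v w : Fin 2 → R)
    {a b : ℤ →₀ (Fin 2 → R)} (ha : ∀ j, 0 ≤ j → a j = 0) (hb : ∀ j, 0 ≤ j → b j = 0) :
    pairing R (single (k : ℤ) v + a) (single (l : ℤ) w + b)
      = (v 0 * b (-1 - k) 1 - v 1 * b (-1 - k) 0) - (w 0 * a (-1 - l) 1 - w 1 * a (-1 - l) 0) := by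
  have hsingle (m n : ℕ) (u : Fin 2 → R) : single (m : ℤ) u (-1 - n) = 0 :=
    single_eq_of_ne (by omega)
  simp only [map_add, LinearMap.add_apply]
  rw [pairing_swap (single _ w) a, pairing_eq_zero_of_nonneg_eq_zero ha hb]
  simp only [pairing_single_left, hsingle, Pi.zero_apply, mul_zero, sub_zero, zero_add]
  ring

theorem finite_support_pair_comp {c d : ℕ → R} (hc : (Function.support c).Finite)
    (hd : (Function.support d).Finite) {f : ℕ → ℕ} (hf : f.Injective) :
    (Function.support fun i => ![c (f i), d (f i)]).Finite := by
  refine ((hc.union hd).preimage hf.injOn).subset fun i hi => ?_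
  by_contra h
  simp_all [not_or]

variable (R) in
def negTail (c d : ℕ → R) (k : ℕ) : ℤ →₀ (Fin 2 → R) :=
  ∑ᶠ i : ℕ, single (-(i : ℤ) - 1) ![c (i + 1 + k), d (i + 1 + k)]

theorem negTail_apply {c d : ℕ → R} (hc : (Function.support c).Finite)
    (hd : (Function.support d).Finite) (k : ℕ) (j : ℤ) :
    negTail R c d k j = if j < 0 then ![c ((-j).toNat + k), d ((-j).toNat + k)] else 0 := by
  have hfin := finite_support_pair_comp hc hd (f := (· + 1 + k)) fun m n h => by simpa using h
  split_ifs with hj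
  · obtain ⟨n, rfl⟩ : ∃ n : ℕ, j = -(n : ℤ) - 1 := ⟨(-j).toNat - 1, by omega⟩
    rw [negTail, finsum_single_apply_self (fun m n h => by simpa using h) hfin,
      show (-(-(n : ℤ) - 1)).toNat = n + 1 by omega]
  · refine finsum_single_apply_of_notMem_range hfin ?_
    rintro ⟨i, rfl⟩
    dsimp only at hj
    omega

theorem negTail_nonneg {c d : ℕ → R} (hc : (Function.support c).Finite)
    (hd : (Function.support d).Finite) (k : ℕ) (j : ℤ) (hj : 0 ≤ j) :
    negTail R c d k j = 0 := by
  rw [negTail_apply hc hd, if_neg (by omega)]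

theorem pairing_single_add_negTail {c d c' d' : ℕ → R}
    (hc : (Function.support c).Finite) (hd : (Function.support d).Finite)
    (hc' : (Function.support c').Finite) (hd' : (Function.support d').Finite)
    (k l : ℕ) (v w : Fin 2 → R) :
    pairing R (single (k : ℤ) v + negTail R c d k) (single (l : ℤ) w + negTail R c' d' l)
      = (v 0 * d' (k + l + 1) - v 1 * c' (k + l + 1))
        - (w 0 * d (l + k + 1) - w 1 * c (l + k + 1)) := by
  rw [pairing_single_add_single_add k l v w (negTail_nonneg hc hd k) (negTail_nonneg hc' hd' l),
    negTail_apply hc hd, negTail_apply hc' hd', if_pos (by omega), if_pos (by omega),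
    show (-(-1 - (k : ℤ))).toNat + l = k + l + 1 by omega,
    show (-(-1 - (l : ℤ))).toNat + k = l + k + 1 by omega]
  simp

variable (R) in
def shiftProj : (ℤ →₀ (Fin 2 → R)) →ₗ[R] (ℤ →₀ (Fin 2 → R)) :=
  let t := lmapDomain (Fin 2 → R) R (· + 1 : ℤ → ℤ)
  t - lsingle 0 ∘ₗ lapply 0 ∘ₗ t

theorem shiftProj_apply (u : ℤ →₀ (Fin 2 → R)) :
    shiftProj R u = mapDomain (· + 1) u - single 0 (mapDomain (· + 1) u 0) := by
  simp [shiftProj]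

theorem shiftProj_apply_apply (u : ℤ →₀ (Fin 2 → R)) (j : ℤ) :
    shiftProj R u j = if j = 0 then 0 else u (j - 1) := by
  rw [shiftProj_apply, Finsupp.sub_apply, mapDomain_add_one_apply, mapDomain_add_one_apply,
    single_apply]
  split_ifs with h <;> simp_all

theorem shiftProj_single_add_negTail {c d : ℕ → R} (hc : (Function.support c).Finite)
    (hd : (Function.support d).Finite) (k : ℕ) (v : Fin 2 → R) :
    shiftProj R (single (k : ℤ) v + negTail R c d k)
      = single ((k + 1 : ℕ) : ℤ) v + negTail R c d (k + 1) := by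
  ext j : 1
  simp only [shiftProj_apply_apply, Finsupp.add_apply, single_apply, negTail_apply hc hd]
  split_ifs <;> first | omega | simp only [zero_add, add_zero]
  rw [show (-(j - 1)).toNat + k = (-j).toNat + (k + 1) by omega]

variable (R) in
def generators (x y z : ℕ → R) : Set (ℤ →₀ (Fin 2 → R)) :=
  {v | ∃ k : ℕ, v = single (k : ℤ) ![1, 0] + negTail R y z k} ∪
    {v | ∃ k : ℕ, v = single (k : ℤ) ![0, 1] + negTail R x (-y) k}

variable {x y z : ℕ → R}

theorem pairing_eq_zero_of_mem_span_generators (hx : (Function.support x).Finite)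
    (hy : (Function.support y).Finite) (hz : (Function.support z).Finite)
    {a b : ℤ →₀ (Fin 2 → R)} (ha : a ∈ Submodule.span R (generators R x y z))
    (hb : b ∈ Submodule.span R (generators R x y z)) : pairing R a b = 0 := by
  have hy' : (Function.support (-y)).Finite := by rwa [Function.support_neg]
  refine (Submodule.mem_bot R).1 <|
    LinearMap.BilinMap.apply_apply_mem_of_mem_span _ _ _ _ ?_ a b ha hb
  rintro _ (⟨k, rfl⟩ | ⟨k, rfl⟩) _ (⟨l, rfl⟩ | ⟨l, rfl⟩) <;>
    simp only [pairing_single_add_negTail, hx, hy, hz, hy'] <;> simp [add_comm l k]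

theorem map_shiftProj_span_generators_le (hx : (Function.support x).Finite)
    (hy : (Function.support y).Finite) (hz : (Function.support z).Finite) :
    (Submodule.span R (generators R x y z)).map (shiftProj R)
      ≤ Submodule.span R (generators R x y z) := by
  have hy' : (Function.support (-y)).Finite := by rwa [Function.support_neg]
  refine (Submodule.map_span_le _ _ _).2 ?_
  rintro _ (⟨k, rfl⟩ | ⟨k, rfl⟩)
  · exact Submodule.subset_span (Or.inl ⟨k + 1, shiftProj_single_add_negTail hy hz k _⟩)
  · exact Submodule.subset_span (Or.inr ⟨k + 1, shiftProj_single_add_negTail hx hy' k _⟩)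

end DegenerateSl2

end

theorem stmt14 (x y z : ℕ → ℂ)
    (hx : {i | x i ≠ 0}.Finite) (hy : {i | y i ≠ 0}.Finite) (hz : {i | z i ≠ 0}.Finite)
    (U : Submodule ℂ (ℤ →₀ (Fin 2 → ℂ)))
    (hU : U = Submodule.span ℂ
      ({v | ∃ k : ℕ, v = Finsupp.single (k : ℤ) ![1, 0] +
          ∑ᶠ i : ℕ, Finsupp.single (-(i : ℤ) - 1) ![y (i + 1 + k), z (i + 1 + k)]} ∪
       {v | ∃ k : ℕ, v = Finsupp.single (k : ℤ) ![0, 1] +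
          ∑ᶠ i : ℕ, Finsupp.single (-(i : ℤ) - 1) ![x (i + 1 + k), -(y (i + 1 + k))]})) :
    (∀ a ∈ U, ∀ b ∈ U,
      ∑ᶠ i : ℤ, (a i 0 * b (-1 - i) 1 - a i 1 * b (-1 - i) 0) = 0) ∧
    (∀ u ∈ U, Finsupp.mapDomain (· + 1) u -
        Finsupp.single 0 ((Finsupp.mapDomain (· + 1) u) 0) ∈ U) := by
  obtain rfl : U = Submodule.span ℂ (DegenerateSl2.generators ℂ x y z) := hU
  refine ⟨fun a ha b hb => ?_, fun u hu => ?_⟩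
  · rw [← DegenerateSl2.pairing_apply]
    exact DegenerateSl2.pairing_eq_zero_of_mem_span_generators hx hy hz ha hb
  · rw [← DegenerateSl2.shiftProj_apply]
    exact DegenerateSl2.map_shiftProj_span_generators_le hx hy hz (Submodule.mem_map_of_mem hu)
end

section
/- Let (p_k)_{k∈ℤ} and (q_k)_{k∈ℤ} be two sequences of nonzero complex numbers satisfying, for every k ≥ 1: p_0/q_{−k} = p_1/q_{−k+1} = … = p_{k−1}/q_{−1}; q_0/q_{−k} = q_1/q_{−k+1} = … = q_{k−1}/q_{−1} = p_0/p_{−k} = p_1/p_{−k+1} = … = p_{k−1}/p_{−1}; and q_0/p_{−k} = q_1/p_{−k+1} = … = q_{k−1}/p_{−1}. Then there exists a nonzero complex number r such that q_a = q_0 r^a and p_a = p_0 r^a for all a ≥ 0, q_b = q_{−1} r^{b+1} and p_b = p_{−1} r^{b+1} for all b < 0, and moreover q_0/q_{−1} = p_0/p_{−1}. Conversely, any sequences of this form satisfy all the relations above. -/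
/- The chains of relations, for each `k ≥ 1`:
`p_0/q_{-k} = p_1/q_{-k+1} = … = p_{k-1}/q_{-1}`,
`q_0/q_{-k} = … = q_{k-1}/q_{-1} = p_0/p_{-k} = … = p_{k-1}/p_{-1}`,
`q_0/p_{-k} = … = q_{k-1}/p_{-1}`,
are expressed by saying that for all `a, b < k` the corresponding ratios agree. -/

private lemma ratio_step {x y u v : ℂ} (hy : y ≠ 0) (hv : v ≠ 0)
    (h : x / y = u / v) : u = v / y * x := by
  have h' := (div_eq_div_iff hy hv).mp h
  rw [div_mul_eq_mul_div, eq_div_iff hy]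
  linear_combination -h'

theorem stmt15 (p q : ℤ → ℂ) (hp : ∀ k, p k ≠ 0) (hq : ∀ k, q k ≠ 0) :
    (∀ k : ℕ, 1 ≤ k → ∀ a b : ℕ, a < k → b < k →
      p a / q ((a : ℤ) - k) = p b / q ((b : ℤ) - k) ∧
      q a / q ((a : ℤ) - k) = q b / q ((b : ℤ) - k) ∧
      q a / q ((a : ℤ) - k) = p a / p ((a : ℤ) - k) ∧
      q a / p ((a : ℤ) - k) = q b / p ((b : ℤ) - k)) ↔
    (∃ r : ℂ, r ≠ 0 ∧
      (∀ a : ℤ, 0 ≤ a → q a = q 0 * r ^ a ∧ p a = p 0 * r ^ a) ∧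
      (∀ b : ℤ, b < 0 → q b = q (-1) * r ^ (b + 1) ∧ p b = p (-1) * r ^ (b + 1)) ∧
      q 0 / q (-1) = p 0 / p (-1)) := by
  constructor
  · intro h
    set r := q (-1) / q (-2) with hr_def
    have hr : r ≠ 0 := div_ne_zero (hq _) (hq _)
    -- step lemma for nonnegative indices
    have key : ∀ a : ℕ, q ((a:ℤ)+1) = r * q a ∧ p ((a:ℤ)+1) = r * p a := by
      intro a
      obtain ⟨h1, h2, h3, h4⟩ := h (a+2) (by omega) a (a+1) (by omega) (by omega)
      have e1 : ((a:ℤ)) - ((a+2:ℕ):ℤ) = -2 := by push_cast; ring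
      have e2 : (((a+1:ℕ)):ℤ) - ((a+2:ℕ):ℤ) = -1 := by push_cast; ring
      have e3 : (((a+1:ℕ)):ℤ) = (a:ℤ)+1 := by push_cast; ring
      simp only [e1, e2] at h1 h2
      simp only [e3] at h1 h2
      exact ⟨ratio_step (hq _) (hq _) h2, ratio_step (hq _) (hq _) h1⟩
    -- step lemma for indices ≤ -2
    have keyneg : ∀ m : ℤ, m ≤ -2 → q (m+1) = r * q m ∧ p (m+1) = r * p m := by
      intro m hm
      obtain ⟨hq1, hp1⟩ := key 0
      norm_num at hq1 hp1
      obtain ⟨h1, h2, h3, h4⟩ := h (-m).toNat (by omega) 0 1 (by omega) (by omega)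
      have hk : (((-m).toNat : ℕ) : ℤ) = -m := Int.toNat_of_nonneg (by omega)
      simp only [Nat.cast_zero, Nat.cast_one, hk] at h2 h4
      rw [show (0:ℤ) - -m = m by ring, show (1:ℤ) - -m = m+1 by ring] at h2 h4
      have c2 := (div_eq_div_iff (hq m) (hq (m+1))).mp h2
      have c4 := (div_eq_div_iff (hp m) (hp (m+1))).mp h4
      constructor
      · apply mul_left_cancel₀ (hq 0)
        linear_combination c2 + q m * hq1
      · apply mul_left_cancel₀ (hq 0)
        linear_combination c4 + p m * hq1
    refine ⟨r, hr, ?_, ?_, ?_⟩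
    · have pos : ∀ n : ℕ, q n = q 0 * r ^ n ∧ p n = p 0 * r ^ n := by
        intro n
        induction n with
        | zero => simp
        | succ n ih =>
          obtain ⟨k1, k2⟩ := key n
          have e : (((n+1:ℕ)):ℤ) = (n:ℤ)+1 := by push_cast; ring
          rw [e, k1, k2, ih.1, ih.2, pow_succ]
          constructor <;> ring
      intro a ha
      lift a to ℕ using ha
      exact_mod_cast pos a
    · have neg : ∀ n : ℕ, q (-(n:ℤ)-1) = q (-1) * r ^ (-(n:ℤ)) ∧
          p (-(n:ℤ)-1) = p (-1) * r ^ (-(n:ℤ)) := by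
        intro n
        induction n with
        | zero => simp
        | succ n ih =>
          obtain ⟨k1, k2⟩ := keyneg (-(n:ℤ)-2) (by omega)
          have e : (-(n:ℤ)-2) + 1 = -(n:ℤ)-1 := by ring
          rw [e] at k1 k2
          have e2 : (-((n+1:ℕ):ℤ)) = (-(n:ℤ)) + (-1) := by push_cast; ring
          have e3 : (-((n+1:ℕ):ℤ)-1) = -(n:ℤ)-2 := by push_cast; ring
          rw [e3, e2, zpow_add₀ hr, zpow_neg_one]
          constructor
          · apply mul_left_cancel₀ hr
            rw [← k1, ih.1]
            field_simp
          · apply mul_left_cancel₀ hr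
            rw [← k2, ih.2]
            field_simp
      intro b hb
      obtain ⟨n, hn⟩ : ∃ n : ℕ, b = -(n:ℤ)-1 := ⟨(-b-1).toNat, by omega⟩
      subst hn
      have e : (-(n:ℤ)-1) + 1 = -(n:ℤ) := by ring
      rw [e]
      exact neg n
    · obtain ⟨h1, h2, h3, h4⟩ := h 1 le_rfl 0 0 (by omega) (by omega)
      norm_num at h3
      exact h3
  · rintro ⟨r, hr, hpos, hneg, h01⟩ k hk a b ha hb
    have hdiv : ∀ c d : ℂ, ∀ x y : ℤ, (c * r ^ x) / (d * r ^ y) = c / d * r ^ (x - y) := by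
      intro c d x y
      rw [mul_div_mul_comm, ← zpow_sub₀ hr]
    obtain ⟨qa, pa⟩ := hpos a (Int.natCast_nonneg _)
    obtain ⟨qb, pb⟩ := hpos b (Int.natCast_nonneg _)
    obtain ⟨qa', pa'⟩ := hneg ((a:ℤ) - k) (by omega)
    obtain ⟨qb', pb'⟩ := hneg ((b:ℤ) - k) (by omega)
    rw [qa, pa, qb, pb, qa', pa', qb', pb', hdiv, hdiv, hdiv, hdiv, hdiv, hdiv, hdiv]
    have ea : (a:ℤ) - ((a:ℤ) - k + 1) = (k:ℤ) - 1 := by ring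
    have eb : (b:ℤ) - ((b:ℤ) - k + 1) = (k:ℤ) - 1 := by ring
    rw [ea, eb, h01]
    exact ⟨rfl, rfl, rfl, rfl⟩
end

section
/- Let N, m ≥ 1 and let R and R' be A_N-submodules of the free module A_N^{⊕m}. Then there exists an A_N-module automorphism g of A_N^{⊕m} with g(R) = R' if and only if R and R' are isomorphic as A_N-modules. -/
set_option synthInstance.maxHeartbeats 1000000
set_option maxHeartbeats 1000000

open Polynomial

/-!
The preimage `L ⊆ K[X]^m` of a submodule `R ⊆ A_N^m` contains `X^N K[X]^m`. By the Smith normal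
form over the PID `K[X]`, an automorphism of `K[X]^m` carries `L` to `⊕ᵢ (X^{vᵢ})` with `vᵢ ≤ N`;
it preserves `X^N K[X]^m`, so it descends to an automorphism of `A_N^m` carrying `R` to the diagonal
submodule `⊕ᵢ t^{vᵢ} A_N`. The dimensions `dim_K (t^j R) = ∑ᵢ (N - vᵢ - j)⁺` are isomorphism
invariants and determine the multiset of the `vᵢ`, so isomorphic submodules are carried to
diagonal submodules that differ by a permutation of the coordinates.
-/

open Module
open scoped Pointwise

namespace Submodule

theorem map_pointwise_smul_of_linearMap {R M M' : Type*} [CommSemiring R] [AddCommMonoid M]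
    [Module R M] [AddCommMonoid M'] [Module R M'] (f : M →ₗ[R] M') (a : R) (p : Submodule R M) :
    (a • p).map f = a • p.map f := by
  simp only [pointwise_smul_def, ← map_comp]
  congr 1
  ext x
  simp

theorem finrank_pointwise_smul_eq_of_linearEquiv (K : Type*) {A M : Type*} [Field K]
    [CommRing A] [Algebra K A] [AddCommGroup M] [Module A M] [Module K M] [IsScalarTower K A M]
    {P Q : Submodule A M} (e : P ≃ₗ[A] Q) (a : A) :
    finrank K ↥(a • P) = finrank K ↥(a • Q) := by
  have smul_top (p : Submodule A M) : (a • (⊤ : Submodule A p)).map p.subtype = a • p := by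
    rw [map_pointwise_smul_of_linearMap, map_subtype_top]
  have he : (a • (⊤ : Submodule A P)).map (e : P →ₗ[A] Q) = a • ⊤ := by
    rw [map_pointwise_smul_of_linearMap, map_top, LinearEquiv.range]
  let f : ↥(a • P) ≃ₗ[A] ↥(a • Q) :=
    (LinearEquiv.ofEq _ _ (smul_top P)).symm ≪≫ₗ
      (equivMapOfInjective _ P.injective_subtype _).symm ≪≫ₗ
      e.submoduleMap _ ≪≫ₗ LinearEquiv.ofEq _ _ he ≪≫ₗ
      equivMapOfInjective _ Q.injective_subtype _ ≪≫ₗ LinearEquiv.ofEq _ _ (smul_top Q)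
  exact (f.restrictScalars K).finrank_eq

theorem pointwise_smul_pi_span_singleton {A ι : Type*} [CommSemiring A] (a : A) (b : ι → A) :
    a • pi Set.univ (fun i => Ideal.span {b i}) = pi Set.univ fun i => Ideal.span {a * b i} := by
  ext x
  simp only [mem_smul_pointwise_iff_exists, mem_pi, Set.mem_univ, true_imp_iff,
    Ideal.mem_span_singleton']
  constructor
  · rintro ⟨y, hy, rfl⟩ i
    obtain ⟨c, hc⟩ := hy i
    exact ⟨c, by rw [Pi.smul_apply, ← hc, smul_eq_mul]; ring⟩
  · intro hx
    choose c hc using hx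
    exact ⟨fun i => c i * b i, fun i => ⟨c i, rfl⟩, funext fun i => by
      rw [Pi.smul_apply, ← hc, smul_eq_mul]; ring⟩

def piUnivEquiv {R ι : Type*} {φ : ι → Type*} [Semiring R] [∀ i, AddCommMonoid (φ i)]
    [∀ i, Module R (φ i)] (p : ∀ i, Submodule R (φ i)) :
    ↥(pi Set.univ p) ≃ₗ[R] ∀ i, ↥(p i) where
  toFun x i := ⟨x.1 i, x.2 i trivial⟩
  invFun y := ⟨fun i => y i, fun i _ => (y i).2⟩
  map_add' _ _ := rfl
  map_smul' _ _ := rfl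

theorem map_funCongrLeft_pi {R M ι κ : Type*} [Semiring R] [AddCommMonoid M] [Module R M]
    (e : ι ≃ κ) (p : κ → Submodule R M) :
    (pi Set.univ p).map (LinearEquiv.funCongrLeft R M e : (κ → M) →ₗ[R] (ι → M)) =
      pi Set.univ (p ∘ e) := by
  ext x
  simp only [map_equiv_eq_comap_symm, mem_comap, mem_pi, Set.mem_univ, true_imp_iff,
    LinearEquiv.coe_coe, LinearEquiv.funCongrLeft_symm, LinearEquiv.funCongrLeft_apply,
    LinearMap.funLeft_apply, Function.comp_apply]
  rw [e.forall_congr_left]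
  simp

theorem span_range_single_eq_pi {R ι : Type*} [Semiring R] [Finite ι] [DecidableEq ι]
    (a : ι → R) :
    span R (Set.range fun i => Pi.single i (a i)) = pi Set.univ fun i => Ideal.span {a i} := by
  rw [← iSup_map_single, span_range_eq_iSup]
  congr 1
  ext1 i
  rw [Ideal.span, map_span, Set.image_singleton]
  rfl

theorem finrank_eq_of_smul_top_le {R M : Type*} [CommRing R] [IsDomain R] [IsNoetherianRing R]
    [AddCommGroup M] [Module R M] [Module.Finite R M]
    [Module.IsTorsionFree R M] {p : Submodule R M} {a : R} (ha : a ≠ 0)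
    (h : a • (⊤ : Submodule R M) ≤ p) : finrank R p = finrank R M := by
  refine le_antisymm p.finrank_le ?_
  have hinj : Function.Injective (DistribSMul.toLinearMap R M a) := IsSMulRegular.of_ne_zero ha
  calc finrank R M = finrank R ↥(a • (⊤ : Submodule R M)) := by
        rw [pointwise_smul_def, map_top, LinearMap.finrank_range_of_inj hinj]
    _ ≤ finrank R p := finrank_mono h

variable {R : Type*} [CommRing R] [IsDomain R] [IsPrincipalIdealRing R]

variable {ι : Type*} [Finite ι]

theorem exists_linearEquiv_map_eq_pi_span (L : Submodule R (ι → R))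
    (hL : finrank R L = finrank R (ι → R)) :
    ∃ (e : (ι → R) ≃ₗ[R] (ι → R)) (a : ι → R),
      L.map (e : (ι → R) →ₗ[R] (ι → R)) = pi Set.univ fun i => Ideal.span {a i} := by
  classical
  obtain ⟨b, a, ab, hab⟩ := L.exists_smith_normal_form_of_rank_eq (Pi.basisFun R ι) hL
  refine ⟨b.equivFun, a, ?_⟩
  have hspan : L = span R (Set.range fun i => a i • b i) := by
    conv_lhs => rw [← L.map_subtype_top, ← ab.span_eq, map_span, ← Set.range_comp]
    simp only [Function.comp_def, subtype_apply, hab]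
  rw [hspan, map_span, ← Set.range_comp, ← span_range_single_eq_pi]
  congr 2
  ext1 i
  simp [Finsupp.single_eq_pi_single, ← Pi.single_smul]

theorem exists_linearEquiv_map_eq_pi_span_pow {p : R} (hp : Prime p) {N : ℕ}
    (L : Submodule R (ι → R)) (hL : p ^ N • (⊤ : Submodule R (ι → R)) ≤ L) :
    ∃ (e : (ι → R) ≃ₗ[R] (ι → R)) (v : ι → ℕ), (∀ i, v i ≤ N) ∧
      L.map (e : (ι → R) →ₗ[R] (ι → R)) = pi Set.univ fun i => Ideal.span {p ^ v i} := by
  classical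
  obtain ⟨e, a, he⟩ := L.exists_linearEquiv_map_eq_pi_span
    (finrank_eq_of_smul_top_le (pow_ne_zero N hp.ne_zero) hL)
  have hdvd (i : ι) : a i ∣ p ^ N := by
    have hmem : Pi.single i (p ^ N) ∈ L.map (e : (ι → R) →ₗ[R] (ι → R)) :=
      ⟨p ^ N • e.symm (Pi.single i 1), hL (smul_mem_pointwise_smul _ _ _ trivial), by
        simp [← Pi.single_smul]⟩
    rw [he] at hmem
    simpa [Ideal.mem_span_singleton] using hmem i trivial
  choose v hv hassoc using fun i => (dvd_prime_pow hp N).1 (hdvd i)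
  refine ⟨e, v, hv, ?_⟩
  rw [he]
  congr 1
  ext1 i
  exact Ideal.span_singleton_eq_span_singleton.2 (hassoc i)

end Submodule

theorem LinearEquiv.exists_comp_eq_of_map_ker_eq {S M M₂ : Type*} [Ring S] [AddCommGroup M]
    [AddCommGroup M₂] [Module S M] [Module S M₂] {π : M →ₗ[S] M₂} (hπ : Function.Surjective π)
    (φ : M ≃ₗ[S] M) (hφ : (LinearMap.ker π).map (φ : M →ₗ[S] M) = LinearMap.ker π) :
    ∃ g : M₂ ≃ₗ[S] M₂, ∀ x, g (π x) = π (φ x) := by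
  let e := π.quotKerEquivOfSurjective hπ
  refine ⟨e.symm ≪≫ₗ Submodule.Quotient.equiv _ _ φ hφ ≪≫ₗ e, fun x => ?_⟩
  simp [e, LinearMap.quotKerEquivOfSurjective_symm_apply]

theorem pow_dvd_mul_pow_iff {M : Type*} [CommMonoidWithZero M] [IsCancelMulZero M] {a : M}
    (ha : a ≠ 0) (b : M) (n c : ℕ) : a ^ n ∣ b * a ^ c ↔ a ^ (n - c) ∣ b := by
  rcases le_or_gt n c with h | h
  · simp only [Nat.sub_eq_zero_of_le h, pow_zero, one_dvd, iff_true]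
    exact dvd_mul_of_dvd_right (pow_dvd_pow a h) b
  · rw [← Nat.sub_add_cancel h.le, pow_add, Nat.add_sub_cancel,
      mul_dvd_mul_iff_right (pow_ne_zero c ha)]

section Counting

open Finset

variable {ι : Type*} [Fintype ι]

theorem exists_equiv_comp_eq_of_card_filter_lt_eq {v w : ι → ℕ}
    (h : ∀ c, #{i | v i < c} = #{i | w i < c}) : ∃ σ : ι ≃ ι, w ∘ σ = v := by
  classical
  have card_fiber (u : ι → ℕ) (c : ℕ) :
      Fintype.card {i // u i = c} = #{i | u i < c + 1} - #{i | u i < c} := by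
    have hsplit : filter (u · < c + 1) univ = filter (u · < c) univ ∪ filter (u · = c) univ := by
      ext i
      simp only [mem_filter, mem_univ, true_and, mem_union]
      omega
    rw [Fintype.card_subtype, hsplit,
      card_union_of_disjoint (disjoint_filter.2 fun _ _ h₁ h₂ => by omega)]
    omega
  have hfiber c : Fintype.card {i // v i = c} = Fintype.card {i // w i = c} := by
    rw [card_fiber, card_fiber, h, h]
  exact ⟨Equiv.ofFiberEquiv fun c => Fintype.equivOfCardEq (hfiber c),
    funext (Equiv.ofFiberEquiv_map _)⟩

theorem sum_tsub_eq_sum_tsub_succ_add_card (N : ℕ) (u : ι → ℕ) (j : ℕ) :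
    ∑ i, (N - (u i + j)) = ∑ i, (N - (u i + (j + 1))) + #{i | u i + j < N} := by
  rw [card_filter, ← sum_add_distrib]
  refine sum_congr rfl fun i _ => ?_
  split_ifs <;> omega

theorem card_filter_lt_eq_of_sum_tsub_eq {N : ℕ} {v w : ι → ℕ} (hv : ∀ i, v i ≤ N)
    (hw : ∀ i, w i ≤ N) (h : ∀ j, ∑ i, (N - (v i + j)) = ∑ i, (N - (w i + j))) (c : ℕ) :
    #{i | v i < c} = #{i | w i < c} := by
  have hcount j : #{i | v i + j < N} = #{i | w i + j < N} := by
    have := sum_tsub_eq_sum_tsub_succ_add_card N v j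
    have := sum_tsub_eq_sum_tsub_succ_add_card N w j
    have := h j
    have := h (j + 1)
    omega
  rcases le_or_gt c N with hc | hc
  · have hshift (u : ι → ℕ) : #{i | u i + (N - c) < N} = #{i | u i < c} := by
      congr 1
      ext i
      simp only [mem_filter, mem_univ, true_and]
      omega
    rw [← hshift v, ← hshift w, hcount]
  · rw [filter_true_of_mem fun i _ => (hv i).trans_lt hc,
      filter_true_of_mem fun i _ => (hw i).trans_lt hc]

end Counting

abbrev TruncPoly (K : Type*) [Field K] (N : ℕ) : Type _ := K[X] ⧸ Ideal.span {(X : K[X]) ^ N}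

noncomputable section

namespace TruncPoly

variable {K : Type*} [Field K] {N : ℕ}

abbrev gen : TruncPoly K N := Ideal.Quotient.mk _ X

instance : Module.Finite K (TruncPoly K N) :=
  (AdjoinRoot.powerBasis (pow_ne_zero N (X_ne_zero : (X : K[X]) ≠ 0))).finite

theorem mk_eq_zero_iff (p : K[X]) :
    (Ideal.Quotient.mk _ p : TruncPoly K N) = 0 ↔ X ^ N ∣ p := by
  rw [Ideal.Quotient.eq_zero_iff_mem, Ideal.mem_span_singleton]

theorem algebraMap_surjective : Function.Surjective (algebraMap K[X] (TruncPoly K N)) :=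
  Ideal.Quotient.mk_surjective

theorem ker_toSpanSingleton_gen_pow (c : ℕ) :
    LinearMap.ker (LinearMap.toSpanSingleton K[X] (TruncPoly K N) (gen ^ c)) =
      Ideal.span {X ^ (N - c)} := by
  ext p
  have hsmul : p • (gen ^ c : TruncPoly K N) = Ideal.Quotient.mk _ (p * X ^ c) := by
    rw [map_mul, map_pow]
    rfl
  rw [LinearMap.mem_ker, LinearMap.toSpanSingleton_apply, Ideal.mem_span_singleton, hsmul,
    mk_eq_zero_iff, pow_dvd_mul_pow_iff X_ne_zero]

theorem finrank_span_gen_pow (c : ℕ) :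
    finrank K ↥(Ideal.span {gen ^ c} : Ideal (TruncPoly K N)) = N - c := by
  let θ := LinearMap.toSpanSingleton K[X] (TruncPoly K N) (gen ^ c)
  have hrange : LinearMap.range θ =
      (Ideal.span {gen ^ c} : Ideal (TruncPoly K N)).restrictScalars K[X] := by
    rw [← LinearMap.span_singleton_eq_range]
    exact (Submodule.restrictScalars_span _ _ algebraMap_surjective _).symm
  let e := (Submodule.quotEquivOfEq _ _ (ker_toSpanSingleton_gen_pow c).symm ≪≫ₗ
    θ.quotKerEquivRange ≪≫ₗ LinearEquiv.ofEq _ _ hrange).restrictScalars K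
  change finrank K ↥((Ideal.span {gen ^ c} : Ideal (TruncPoly K N)).restrictScalars K[X]) = _
  rw [← e.finrank_eq, finrank_quotient_span_eq_natDegree, natDegree_X_pow]

variable {ι : Type*}

variable (K N) in
def diagPow (v : ι → ℕ) : Submodule (TruncPoly K N) (ι → TruncPoly K N) :=
  Submodule.pi Set.univ fun i => Ideal.span {gen ^ v i}

theorem pointwise_smul_diagPow (j : ℕ) (v : ι → ℕ) :
    (gen ^ j : TruncPoly K N) • diagPow K N v = diagPow K N fun i => v i + j := by
  simp only [diagPow, Submodule.pointwise_smul_pi_span_singleton, ← pow_add, add_comm j]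

theorem finrank_diagPow [Fintype ι] (c : ι → ℕ) :
    finrank K ↥(diagPow K N c) = ∑ i, (N - c i) := by
  rw [diagPow, ((Submodule.piUnivEquiv _).restrictScalars K).finrank_eq, finrank_pi_fintype]
  simp only [finrank_span_gen_pow]

variable (K N ι) in
def mkPi : (ι → K[X]) →ₗ[K[X]] (ι → TruncPoly K N) :=
  (Algebra.linearMap K[X] (TruncPoly K N)).compLeft ι

theorem mkPi_apply (x : ι → K[X]) (i : ι) : mkPi K N ι x i = Ideal.Quotient.mk _ (x i) := rfl

theorem mkPi_surjective : Function.Surjective (mkPi K N ι) := fun y =>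
  ⟨fun i => (Ideal.Quotient.mk_surjective (y i)).choose,
    funext fun i => (Ideal.Quotient.mk_surjective (y i)).choose_spec⟩

theorem ker_mkPi : LinearMap.ker (mkPi K N ι) = (X ^ N : K[X]) • ⊤ := by
  ext x
  simp only [LinearMap.mem_ker, funext_iff, mkPi_apply, Pi.zero_apply, mk_eq_zero_iff,
    Submodule.mem_smul_pointwise_iff_exists, Submodule.mem_top, true_and]
  constructor
  · intro h
    choose y hy using h
    exact ⟨y, fun i => (hy i).symm⟩
  · rintro ⟨y, hy⟩ i
    exact ⟨y i, (hy i).symm⟩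

theorem map_mkPi_pi_span (c : ι → ℕ) :
    (Submodule.pi Set.univ fun i => Ideal.span {(X : K[X]) ^ c i}).map (mkPi K N ι) =
      (diagPow K N c).restrictScalars K[X] := by
  ext y
  simp only [Submodule.mem_map, Submodule.restrictScalars_mem, diagPow, Submodule.mem_pi,
    Set.mem_univ, true_imp_iff, Ideal.mem_span_singleton', funext_iff, mkPi_apply]
  constructor
  · rintro ⟨x, hx, hxy⟩ i
    obtain ⟨a, ha⟩ := hx i
    exact ⟨Ideal.Quotient.mk _ a, by rw [← hxy, ← ha, map_mul, map_pow]⟩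
  · intro hy
    choose a ha using hy
    refine ⟨fun i => (Ideal.Quotient.mk_surjective (a i)).choose * X ^ c i,
      fun i => ⟨_, rfl⟩, fun i => ?_⟩
    rw [map_mul, map_pow, (Ideal.Quotient.mk_surjective (a i)).choose_spec, ha]

theorem exists_linearEquiv_map_eq_diagPow [Finite ι]
    (R : Submodule (TruncPoly K N) (ι → TruncPoly K N)) :
    ∃ (g : (ι → TruncPoly K N) ≃ₗ[TruncPoly K N] (ι → TruncPoly K N)) (v : ι → ℕ),
      (∀ i, v i ≤ N) ∧ R.map (g : (ι → TruncPoly K N) →ₗ[TruncPoly K N] _) = diagPow K N v := by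
  set π := mkPi K N ι
  set L := (R.restrictScalars K[X]).comap π
  obtain ⟨e, v, hv, he⟩ := L.exists_linearEquiv_map_eq_pi_span_pow prime_X
    (ker_mkPi (K := K) (N := N) (ι := ι) ▸ LinearMap.ker_le_comap π)
  have hker : (LinearMap.ker π).map (e : (ι → K[X]) →ₗ[K[X]] (ι → K[X])) = LinearMap.ker π := by
    rw [ker_mkPi, Submodule.map_pointwise_smul_of_linearMap, Submodule.map_top,
      LinearEquiv.range]
  obtain ⟨g, hg⟩ := e.exists_comp_eq_of_map_ker_eq mkPi_surjective hker
  refine ⟨g.extendScalarsOfSurjective algebraMap_surjective, v, hv,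
    Submodule.restrictScalars_injective K[X] _ _ ?_⟩
  calc (R.map _).restrictScalars K[X]
      = (L.map π).map (g : (ι → TruncPoly K N) →ₗ[K[X]] (ι → TruncPoly K N)) := by
        rw [Submodule.map_comap_eq_of_surjective mkPi_surjective]
        rfl
    _ = (L.map (e : (ι → K[X]) →ₗ[K[X]] (ι → K[X]))).map π := by
        rw [← Submodule.map_comp, ← Submodule.map_comp]
        congr 1
        exact LinearMap.ext hg
    _ = (diagPow K N v).restrictScalars K[X] := by rw [he, map_mkPi_pi_span]

theorem exists_linearEquiv_map_eq_of_linearEquiv [Fintype ι]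
    {R R' : Submodule (TruncPoly K N) (ι → TruncPoly K N)} (e : R ≃ₗ[TruncPoly K N] R') :
    ∃ g : (ι → TruncPoly K N) ≃ₗ[TruncPoly K N] (ι → TruncPoly K N),
      R.map (g : (ι → TruncPoly K N) →ₗ[TruncPoly K N] _) = R' := by
  obtain ⟨g, v, hv, hg⟩ := exists_linearEquiv_map_eq_diagPow R
  obtain ⟨g', v', hv', hg'⟩ := exists_linearEquiv_map_eq_diagPow R'
  have hdim j : ∑ i, (N - (v i + j)) = ∑ i, (N - (v' i + j)) := by
    rw [← finrank_diagPow (K := K), ← finrank_diagPow (K := K), ← pointwise_smul_diagPow,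
      ← pointwise_smul_diagPow, ← hg, ← hg']
    exact Submodule.finrank_pointwise_smul_eq_of_linearEquiv K
      ((g.submoduleMap R).symm ≪≫ₗ e ≪≫ₗ g'.submoduleMap R') _
  obtain ⟨σ, hσ⟩ := exists_equiv_comp_eq_of_card_filter_lt_eq
    (card_filter_lt_eq_of_sum_tsub_eq hv hv' hdim)
  let P := LinearEquiv.funCongrLeft (TruncPoly K N) (TruncPoly K N) σ.symm
  have hP : (diagPow K N v).map (P : (ι → TruncPoly K N) →ₗ[TruncPoly K N] _) =
      diagPow K N v' := by
    rw [diagPow, Submodule.map_funCongrLeft_pi, ← hσ]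
    simp [Function.comp_def, diagPow]
  refine ⟨g ≪≫ₗ P ≪≫ₗ g'.symm, ?_⟩
  rw [LinearEquiv.coe_trans, Submodule.map_comp, LinearEquiv.coe_trans, Submodule.map_comp, hg,
    hP, Submodule.map_symm_eq_iff, hg']

end TruncPoly

end

theorem stmt16_general (N m : ℕ)
    (R R' : Submodule (AN N) (Fin m → AN N)) :
    (∃ g : (Fin m → AN N) ≃ₗ[AN N] (Fin m → AN N),
        Submodule.map (g : (Fin m → AN N) →ₗ[AN N] (Fin m → AN N)) R = R') ↔
    Nonempty (↥R ≃ₗ[AN N] ↥R') := by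
  constructor
  · rintro ⟨g, rfl⟩
    exact ⟨g.submoduleMap R⟩
  · rintro ⟨e⟩
    exact TruncPoly.exists_linearEquiv_map_eq_of_linearEquiv e

theorem stmt16 (N m : ℕ) (hN : 1 ≤ N) (hm : 1 ≤ m)
    (R R' : Submodule (AN N) (Fin m → AN N)) :
    (∃ g : (Fin m → AN N) ≃ₗ[AN N] (Fin m → AN N),
        Submodule.map (g : (Fin m → AN N) →ₗ[AN N] (Fin m → AN N)) R = R') ↔
    Nonempty (↥R ≃ₗ[AN N] ↥R') :=
  stmt16_general N m R R'
end
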